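/- Let ρ and σ be positive semi-definite operators with spectral decompositions ρ = Σ_k q_k |φ_k⟩⟨φ_k| and σ = Σ_j p_j |ψ_j⟩⟨ψ_j|. For every t ∈ (0,1], Σ_{j,k} q_k²/(q_k + p_j·t) · |⟨ψ_j|φ_k⟩|² = Tr[ρ] − inf_Z ( Tr[ρ Z†Z] + t·Tr[σ (𝟙+Z)(𝟙+Z†)] ). -/

import Mathlib

/-!
Write `ρ = U diag(q) U†` and `σ = V diag(p) V†`, where the unitaries `U`, `V` have columns `φ_k`,
`ψ_j`, and substitute `W = V† Z U`. With `C = V† U`, so that `C_jk = ⟨ψ_j|φ_k⟩`, the objective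
becomes `Σ_{j,k} (q_k |W_jk|² + t p_j |C_jk + W_jk|²)`, which decouples entrywise, and
`min_w (a |w|² + b |u + w|²) = a b / (a + b) |u|²`. Since `C` is unitary,
`Tr ρ = Σ_{j,k} q_k |C_jk|²`, and `q - q b / (q + b) = q² / (q + b)` finishes the computation.
-/

open Matrix Complex

lemma isLeast_weighted_normSq {a b : ℝ} (ha : 0 ≤ a) (hb : 0 ≤ b) (u : ℂ) :
    IsLeast (Set.range fun w : ℂ => a * normSq w + b * normSq (u + w))
      (a * b / (a + b) * normSq u) := by
  rcases (add_nonneg ha hb).eq_or_lt with hab | hab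
  · obtain ⟨rfl, rfl⟩ : a = 0 ∧ b = 0 := ⟨by linarith, by linarith⟩
    exact ⟨⟨0, by simp⟩, by rintro _ ⟨w, rfl⟩; simp⟩
  refine ⟨⟨-((b / (a + b) : ℝ) : ℂ) * u, ?_⟩, ?_⟩
  · have hab' : (a : ℂ) + b ≠ 0 := by exact_mod_cast hab.ne'
    have hsum : u + -((b / (a + b) : ℝ) : ℂ) * u = ((a / (a + b) : ℝ) : ℂ) * u := by
      push_cast
      field_simp
      ring
    simp only [hsum, normSq_mul, normSq_neg, normSq_ofReal]
    field_simp
    ring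
  · rintro _ ⟨w, rfl⟩
    rw [div_mul_eq_mul_div, div_le_iff₀ hab]
    simp only [normSq_apply, add_re, add_im]
    -- the gap is `|(a + b) w + b u|²`
    nlinarith [sq_nonneg (a * w.re + b * (u.re + w.re)), sq_nonneg (a * w.im + b * (u.im + w.im))]

lemma isLeast_range_sum_pi {ι M : Type*} [Fintype ι] [AddCommMonoid M] [PartialOrder M]
    [IsOrderedAddMonoid M] {α : ι → Type*} {f : ∀ i, α i → M} {m : ι → M}
    (h : ∀ i, IsLeast (Set.range (f i)) (m i)) :
    IsLeast (Set.range fun x : (∀ i, α i) => ∑ i, f i (x i)) (∑ i, m i) := by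
  choose x hx using fun i => (h i).1
  refine ⟨⟨x, Finset.sum_congr rfl fun i _ => hx i⟩, ?_⟩
  rintro _ ⟨y, rfl⟩
  exact Finset.sum_le_sum fun i _ => (h i).2 ⟨y i, rfl⟩

lemma sq_div_add_eq_sub {a b : ℝ} (ha : 0 ≤ a) (hb : 0 ≤ b) :
    a ^ 2 / (a + b) = a - a * b / (a + b) := by
  rcases (add_nonneg ha hb).eq_or_lt with hab | hab
  · obtain rfl : a = 0 := by linarith
    simp
  · field_simp
    ring

section
variable {m ι R : Type*} [CommSemiring R] [StarRing R]

lemma sum_smul_vecMulVec_star_eq [Fintype ι] [DecidableEq ι] (d : ι → R) (v : ι → m → R) :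
    ∑ k, d k • vecMulVec (v k) (star (v k)) = (of v)ᵀ * diagonal d * (of v)ᵀᴴ := by
  ext i j
  rw [mul_apply]
  simp only [Matrix.sum_apply, Matrix.smul_apply, vecMulVec_apply, mul_diagonal, transpose_apply,
    conjTranspose_apply, of_apply, Pi.star_apply, smul_eq_mul]
  exact Finset.sum_congr rfl fun k _ => by ring

lemma conjTranspose_transpose_of_mul_transpose_of [Fintype m] (w v : ι → m → R) :
    (of w)ᵀᴴ * (of v)ᵀ = of fun j k => star (w j) ⬝ᵥ v k := by
  ext j k
  simp [mul_apply, dotProduct]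

end

lemma transpose_of_mem_unitaryGroup {n R : Type*} [Fintype n] [DecidableEq n] [CommRing R]
    [StarRing R] {v : n → n → R} (hv : ∀ k l, star (v k) ⬝ᵥ v l = if k = l then 1 else 0) :
    (of v)ᵀ ∈ unitaryGroup n R := by
  rw [mem_unitaryGroup_iff', star_eq_conjTranspose, conjTranspose_transpose_of_mul_transpose_of]
  ext k l
  simp [hv, one_apply]

lemma trace_mul_mul_mul_eq_trace_mul_conj {n R : Type*} [Fintype n] [CommSemiring R]
    (U D U' X : Matrix n n R) : trace (U * D * U' * X) = trace (D * (U' * X * U)) := by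
  rw [Matrix.mul_assoc, trace_mul_cycle, trace_mul_cycle]
  simp only [Matrix.mul_assoc]

section
variable {m n : Type*} [Fintype m] [Fintype n]

lemma re_trace_diagonal_mul_conjTranspose_mul_self [DecidableEq n] (q : n → ℝ)
    (W : Matrix m n ℂ) :
    (trace (diagonal (fun k => (q k : ℂ)) * (Wᴴ * W))).re = ∑ j, ∑ k, q k * normSq (W j k) := by
  simp only [trace, diag_apply, diagonal_mul]
  simp only [mul_apply, conjTranspose_apply, star_def, ← normSq_eq_conj_mul_self, ← ofReal_sum,
    ← ofReal_mul, ofReal_re, Finset.mul_sum]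
  exact Finset.sum_comm

lemma re_trace_diagonal_mul_self_mul_conjTranspose [DecidableEq m] (p : m → ℝ)
    (A : Matrix m n ℂ) :
    (trace (diagonal (fun j => (p j : ℂ)) * (A * Aᴴ))).re = ∑ j, ∑ k, p j * normSq (A j k) := by
  simp only [trace, diag_apply, diagonal_mul]
  simp only [mul_apply, conjTranspose_apply, star_def, mul_conj, ← ofReal_sum,
    ← ofReal_mul, ofReal_re, Finset.mul_sum]

end

section
variable {n : Type*} [Fintype n] [DecidableEq n] {U V : Matrix n n ℂ}
  (hU : U ∈ unitaryGroup n ℂ) (hV : V ∈ unitaryGroup n ℂ) (q p : n → ℝ) (t : ℝ)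
include hU hV

lemma re_trace_conj_diagonal_eq_sum :
    (trace (U * diagonal (fun k => (q k : ℂ)) * Uᴴ)).re =
      ∑ j, ∑ k, q k * normSq ((Vᴴ * U) j k) := by
  have hUU : Uᴴ * U = 1 := Unitary.star_mul_self_of_mem hU
  have hVV : V * Vᴴ = 1 := Unitary.mul_star_self_of_mem hV
  have hC : (Vᴴ * U)ᴴ * (Vᴴ * U) = 1 := by
    rw [conjTranspose_mul, conjTranspose_conjTranspose, Matrix.mul_assoc, ← Matrix.mul_assoc V,
      hVV, Matrix.one_mul, hUU]
  rw [← re_trace_diagonal_mul_conjTranspose_mul_self, hC, Matrix.mul_one, trace_mul_cycle, hUU,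
    Matrix.one_mul]

lemma re_trace_objective_eq_sum (Z : Matrix n n ℂ) :
    (trace (U * diagonal (fun k => (q k : ℂ)) * Uᴴ * (Zᴴ * Z))).re +
        t * (trace (V * diagonal (fun j => (p j : ℂ)) * Vᴴ * ((1 + Z) * (1 + Zᴴ)))).re =
      ∑ j, ∑ k, (q k * normSq ((Vᴴ * Z * U) j k) +
        t * p j * normSq ((Vᴴ * U) j k + (Vᴴ * Z * U) j k)) := by
  have hUU : U * Uᴴ = 1 := Unitary.mul_star_self_of_mem hU
  have hVV : V * Vᴴ = 1 := Unitary.mul_star_self_of_mem hV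
  have hρ : Uᴴ * (Zᴴ * Z) * U = (Vᴴ * Z * U)ᴴ * (Vᴴ * Z * U) := by
    simp only [conjTranspose_mul, conjTranspose_conjTranspose, Matrix.mul_assoc]
    rw [← Matrix.mul_assoc V, hVV, Matrix.one_mul]
  have hσ : Vᴴ * ((1 + Z) * (1 + Zᴴ)) * V =
      (Vᴴ * U + Vᴴ * Z * U) * (Vᴴ * U + Vᴴ * Z * U)ᴴ := by
    have hCW : Vᴴ * U + Vᴴ * Z * U = Vᴴ * (1 + Z) * U := by
      rw [Matrix.mul_add, Matrix.add_mul, Matrix.mul_one]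
    rw [hCW]
    simp only [conjTranspose_mul, conjTranspose_add, conjTranspose_one,
      conjTranspose_conjTranspose, Matrix.mul_assoc]
    rw [← Matrix.mul_assoc U, hUU, Matrix.one_mul]
  rw [trace_mul_mul_mul_eq_trace_mul_conj, trace_mul_mul_mul_eq_trace_mul_conj, hρ, hσ,
    re_trace_diagonal_mul_conjTranspose_mul_self, re_trace_diagonal_mul_self_mul_conjTranspose]
  simp only [Finset.mul_sum, ← Finset.sum_add_distrib, Matrix.add_apply, mul_assoc]

lemma iInf_re_trace_objective_eq (hq : ∀ k, 0 ≤ q k) (hp : ∀ j, 0 ≤ p j) (ht : 0 ≤ t) :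
    ⨅ Z : Matrix n n ℂ, ((trace (U * diagonal (fun k => (q k : ℂ)) * Uᴴ * (Zᴴ * Z))).re +
        t * (trace (V * diagonal (fun j => (p j : ℂ)) * Vᴴ * ((1 + Z) * (1 + Zᴴ)))).re) =
      ∑ j, ∑ k, q k * (t * p j) / (q k + t * p j) * normSq ((Vᴴ * U) j k) := by
  have hUU : Uᴴ * U = 1 := Unitary.star_mul_self_of_mem hU
  have hVV : Vᴴ * V = 1 := Unitary.star_mul_self_of_mem hV
  have hsurj : Function.Surjective fun Z : Matrix n n ℂ => Vᴴ * Z * U := fun W =>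
    ⟨V * W * Uᴴ, by
      simp only [← Matrix.mul_assoc, hVV, Matrix.one_mul]
      rw [Matrix.mul_assoc, hUU, Matrix.mul_one]⟩
  have hmin : IsLeast (Set.range fun W : Matrix n n ℂ => ∑ j, ∑ k,
      (q k * normSq (W j k) + t * p j * normSq ((Vᴴ * U) j k + W j k)))
      (∑ j, ∑ k, q k * (t * p j) / (q k + t * p j) * normSq ((Vᴴ * U) j k)) :=
    isLeast_range_sum_pi fun j => isLeast_range_sum_pi fun k =>
      isLeast_weighted_normSq (hq k) (mul_nonneg ht (hp j)) _
  rw [← hsurj.range_comp] at hmin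
  refine (IsLeast.isGLB ?_).ciInf_eq
  simpa only [re_trace_objective_eq_sum hU hV, Function.comp_def] using hmin

end

/-- Let `ρ = Σ_k q_k |φ_k⟩⟨φ_k|` and `σ = Σ_j p_j |ψ_j⟩⟨ψ_j|` be positive semi-definite
operators given via spectral decompositions.  For every `t ∈ (0,1]`,
`Σ_{j,k} q_k²/(q_k + p_j t) |⟨ψ_j|φ_k⟩|²
  = Tr[ρ] − inf_Z ( Tr[ρ Z†Z] + t·Tr[σ (𝟙+Z)(𝟙+Z†)] )`. -/
theorem stmt4 {n : ℕ} (q p : Fin n → ℝ) (hq : ∀ k, 0 ≤ q k) (hp : ∀ j, 0 ≤ p j)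
    (φ ψ : Fin n → (Fin n → ℂ))
    (hφ : ∀ k l, star (φ k) ⬝ᵥ φ l = if k = l then 1 else 0)
    (hψ : ∀ k l, star (ψ k) ⬝ᵥ ψ l = if k = l then 1 else 0)
    (ρ σ : Matrix (Fin n) (Fin n) ℂ)
    (hρ : ρ = ∑ k, (q k : ℂ) • vecMulVec (φ k) (star (φ k)))
    (hσ : σ = ∑ j, (p j : ℂ) • vecMulVec (ψ j) (star (ψ j)))
    (t : ℝ) (ht : t ∈ Set.Ioc (0 : ℝ) 1) :
    ∑ j, ∑ k, q k ^ 2 / (q k + p j * t) * ‖star (ψ j) ⬝ᵥ φ k‖ ^ 2 =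
      (trace ρ).re - ⨅ Z : Matrix (Fin n) (Fin n) ℂ,
        ((trace (ρ * (Zᴴ * Z))).re +
          t * (trace (σ * ((1 + Z) * (1 + Zᴴ)))).re) := by
  have hU := transpose_of_mem_unitaryGroup hφ
  have hV := transpose_of_mem_unitaryGroup hψ
  have hC : ∀ j k, ((of ψ)ᵀᴴ * (of φ)ᵀ) j k = star (ψ j) ⬝ᵥ φ k := fun j k => by
    rw [conjTranspose_transpose_of_mul_transpose_of, of_apply]
  rw [sum_smul_vecMulVec_star_eq] at hρ hσ
  subst hρ hσ
  rw [iInf_re_trace_objective_eq hU hV q p t hq hp ht.1.le, re_trace_conj_diagonal_eq_sum hU hV]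
  simp only [← Finset.sum_sub_distrib, ← sub_mul, hC, normSq_eq_norm_sq]
  refine Finset.sum_congr rfl fun j _ => Finset.sum_congr rfl fun k _ => ?_
  rw [mul_comm (p j), sq_div_add_eq_sub (hq k) (mul_nonneg ht.1.le (hp j))]
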